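/- arXiv:2211.01082 — 5 statements merged into one kernel-verified Lean document; each statement's English description precedes it below -/
import Mathlib

section
/- Let Γ be a group acting by isometries on a metric space X, let μ be a Γ-invariant Borel measure on X with μ(closedBall z R) < ∞ for every z ∈ X and R > 0, and let x ∈ X. Assume there exist D > 0 such that every point of X lies within distance D of the orbit Γ·x, and δ > 0 such that dist(γ·x, γ'·x) ≥ δ for all γ ≠ γ' in Γ, and assume μ(ball x (δ/2)) > 0. Then each set Γ(R) = {γ ∈ Γ : dist(x, γ·x) ≤ R} is finite, and limsup_{R→∞} (log |Γ(R)|)/R = limsup_{R→∞} (log μ(closedBall x R))/R. -/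
/-!
The balls of radius `δ / 2` around the points `γ • x`, `γ ∈ Γ(R)`, are disjoint, have equal
measure and lie in `closedBall x (R + δ / 2)`, so
`|Γ(R)| μ(ball x (δ / 2)) ≤ μ(closedBall x (R + δ / 2))`.
Conversely the closed balls of radius `D` around the points of `Γ(R + D) • x` cover
`closedBall x R`, so `μ(closedBall x R) ≤ |Γ(R + D)| μ(closedBall x D)`. After taking logarithms
each growth function is bounded by the other one up to a bounded shift of `R` and an additive
constant, and neither changes the limsup of the quotient by `R`.
-/

open Metric MeasureTheory Set Filter

open scoped ENNReal

theorem csInf_eq_csInf_of_forall_add_pos_mem {U W : Set ℝ} (hU : BddBelow U) (hW : BddBelow W)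
    (hUW : ∀ a ∈ U, ∀ ε > 0, a + ε ∈ W) (hWU : ∀ a ∈ W, ∀ ε > 0, a + ε ∈ U) :
    sInf U = sInf W := by
  rcases U.eq_empty_or_nonempty with rfl | hU'
  · rcases W.eq_empty_or_nonempty with rfl | ⟨a, ha⟩
    · rfl
    · exact absurd (hWU a ha 1 one_pos) (notMem_empty _)
  obtain ⟨a, ha⟩ := hU'
  have hW' : W.Nonempty := ⟨a + 1, hUW a ha 1 one_pos⟩
  exact le_antisymm
    (le_csInf hW' fun b hb => le_of_forall_pos_le_add fun ε hε => csInf_le hU (hWU b hb ε hε))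
    (le_csInf ⟨a, ha⟩ fun b hb => le_of_forall_pos_le_add fun ε hε => csInf_le hW (hUW b hb ε hε))

theorem eventually_div_le_add_of_le_shift {f g : ℝ → ℝ} {c C a ε : ℝ}
    (hfg : ∀ᶠ R in atTop, f R ≤ g (R + c) + C) (hε : 0 < ε)
    (hg : ∀ᶠ R in atTop, g R / R ≤ a) : ∀ᶠ R in atTop, f R / R ≤ a + ε := by
  have hg_shift : ∀ᶠ R in atTop, g (R + c) / (R + c) ≤ a :=
    (tendsto_atTop_add_const_right _ c tendsto_id).eventually hg
  have hlarge : ∀ᶠ R in atTop, a * c + C ≤ ε * R :=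
    (tendsto_id.const_mul_atTop hε).eventually_ge_atTop _
  filter_upwards [hfg, hg_shift, hlarge, eventually_gt_atTop (-c), eventually_gt_atTop 0]
    with R hf hg hR hRc hR0
  rw [div_le_iff₀ (by linarith)] at hg
  rw [div_le_iff₀ hR0]
  linarith

theorem isBoundedUnder_ge_div_id_atTop {u : ℝ → ℝ} (hu : IsBoundedUnder (· ≥ ·) atTop u) :
    IsBoundedUnder (· ≥ ·) atTop fun R => u R / R := by
  obtain ⟨m, hm⟩ := hu
  have hm_div : ∀ᶠ R in atTop, -1 < m / R :=
    (tendsto_const_nhds.div_atTop tendsto_id).eventually (lt_mem_nhds (by norm_num))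
  refine ⟨-1, eventually_map.2 ?_⟩
  filter_upwards [eventually_map.1 hm, hm_div, eventually_gt_atTop 0] with R hmR hdiv hR
  exact hdiv.le.trans (div_le_div_of_nonneg_right hmR hR.le)

/- In `ℝ` the limsup of a function unbounded above is the junk value `sInf ∅ = 0`, so a one-sided
comparison would not compare the limsups: both directions are needed. -/
theorem limsup_div_eq_of_le_shift {u w : ℝ → ℝ} {c₁ c₂ C₁ C₂ : ℝ}
    (huw : ∀ᶠ R in atTop, u R ≤ w (R + c₁) + C₁) (hwu : ∀ᶠ R in atTop, w R ≤ u (R + c₂) + C₂)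
    (hu : IsBoundedUnder (· ≥ ·) atTop u) (hw : IsBoundedUnder (· ≥ ·) atTop w) :
    limsup (fun R => u R / R) atTop = limsup (fun R => w R / R) atTop := by
  rw [limsup_eq, limsup_eq]
  exact csInf_eq_csInf_of_forall_add_pos_mem
    (isBoundedUnder_ge_div_id_atTop hu).isCobounded_flip
    (isBoundedUnder_ge_div_id_atTop hw).isCobounded_flip
    (fun a ha ε hε => eventually_div_le_add_of_le_shift hwu hε ha)
    (fun a ha ε hε => eventually_div_le_add_of_le_shift huw hε ha)

theorem one_le_ncard_setOf_dist_smul_le {Γ X : Type*} [Monoid Γ] [PseudoMetricSpace X]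
    [MulAction Γ X] {x : X} {R : ℝ} (hfinite : {γ : Γ | dist x (γ • x) ≤ R}.Finite) (hR : 0 ≤ R) :
    1 ≤ {γ : Γ | dist x (γ • x) ≤ R}.ncard :=
  (ncard_pos hfinite).2 ⟨1, by simpa using hR⟩

section OrbitCounting

variable {Γ X : Type*} [Group Γ] [PseudoMetricSpace X] [MeasurableSpace X] [MulAction Γ X]
  [IsIsometricSMul Γ X] {μ : Measure X} [SMulInvariantMeasure Γ X μ] {x : X} {δ D R : ℝ}

theorem card_mul_measure_ball_le [OpensMeasurableSpace X]
    (hsep : ∀ γ γ' : Γ, γ ≠ γ' → δ ≤ dist (γ • x) (γ' • x)) {s : Finset Γ}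
    (hs : ∀ γ ∈ s, dist x (γ • x) ≤ R) :
    (s.card : ℝ≥0∞) * μ (ball x (δ / 2)) ≤ μ (closedBall x (R + δ / 2)) := by
  have hdisj : (s : Set Γ).PairwiseDisjoint fun γ => ball (γ • x) (δ / 2) :=
    fun γ _ γ' _ h => ball_disjoint_ball (by linarith [hsep γ γ' h])
  calc (s.card : ℝ≥0∞) * μ (ball x (δ / 2)) = ∑ γ ∈ s, μ (ball (γ • x) (δ / 2)) := by
        simp only [← Metric.smul_ball, measure_smul, Finset.sum_const, nsmul_eq_mul]
    _ = μ (⋃ γ ∈ s, ball (γ • x) (δ / 2)) :=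
        (measure_biUnion_finset hdisj fun _ _ => measurableSet_ball).symm
    _ ≤ μ (closedBall x (R + δ / 2)) := by
        refine measure_mono (iUnion₂_subset fun γ hγ => ?_)
        refine ball_subset_closedBall.trans (closedBall_subset_closedBall' ?_)
        linarith [hs γ hγ, dist_comm x (γ • x)]

theorem finite_setOf_dist_smul_le [OpensMeasurableSpace X]
    (hsep : ∀ γ γ' : Γ, γ ≠ γ' → δ ≤ dist (γ • x) (γ' • x)) (hpos : μ (ball x (δ / 2)) ≠ 0)
    (hfin : μ (closedBall x (R + δ / 2)) ≠ ⊤) : {γ : Γ | dist x (γ • x) ≤ R}.Finite := by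
  by_contra hinf
  obtain ⟨n, hn⟩ := ENNReal.exists_nat_mul_gt hpos hfin
  obtain ⟨s, hs, rfl⟩ := Set.Infinite.exists_subset_card_eq hinf n
  exact (card_mul_measure_ball_le hsep hs).not_gt hn

theorem measure_closedBall_le_ncard_mul (hdense : ∀ z : X, ∃ γ : Γ, dist z (γ • x) ≤ D)
    (hfinite : {γ : Γ | dist x (γ • x) ≤ R + D}.Finite) :
    μ (closedBall x R) ≤ {γ : Γ | dist x (γ • x) ≤ R + D}.ncard * μ (closedBall x D) := by
  have hcover : closedBall x R ⊆ ⋃ γ ∈ hfinite.toFinset, closedBall (γ • x) D := by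
    intro z hz
    obtain ⟨γ, hγ⟩ := hdense z
    have hγR : dist x (γ • x) ≤ R + D := by
      linarith [dist_triangle x z (γ • x), mem_closedBall'.1 hz]
    exact mem_iUnion₂.2 ⟨γ, hfinite.mem_toFinset.2 hγR, mem_closedBall.2 hγ⟩
  calc μ (closedBall x R) ≤ ∑ γ ∈ hfinite.toFinset, μ (closedBall (γ • x) D) :=
        (measure_mono hcover).trans (measure_biUnion_finset_le _ _)
    _ = {γ : Γ | dist x (γ • x) ≤ R + D}.ncard * μ (closedBall x D) := by
        simp only [← Metric.smul_closedBall, measure_smul, Finset.sum_const, nsmul_eq_mul,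
          ncard_eq_toFinset_card _ hfinite]

theorem log_ncard_le_log_measure_closedBall_sub [OpensMeasurableSpace X]
    (hsep : ∀ γ γ' : Γ, γ ≠ γ' → δ ≤ dist (γ • x) (γ' • x)) (hpos : μ (ball x (δ / 2)) ≠ 0)
    (hfin : μ (closedBall x (R + δ / 2)) ≠ ⊤) (hR : 0 ≤ R) :
    Real.log {γ : Γ | dist x (γ • x) ≤ R}.ncard ≤
      Real.log (μ (closedBall x (R + δ / 2))).toReal - Real.log (μ (ball x (δ / 2))).toReal := by
  have hfinite := finite_setOf_dist_smul_le hsep hpos hfin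
  have hcount := card_mul_measure_ball_le (μ := μ) hsep (s := hfinite.toFinset)
    fun γ hγ => hfinite.mem_toFinset.1 hγ
  rw [← ncard_eq_toFinset_card _ hfinite] at hcount
  have hN : (0 : ℝ) < {γ : Γ | dist x (γ • x) ≤ R}.ncard := by
    exact_mod_cast one_le_ncard_setOf_dist_smul_le hfinite hR
  have hv : 0 < (μ (ball x (δ / 2))).toReal := ENNReal.toReal_pos hpos
    (ne_top_of_le_ne_top hfin (measure_mono (ball_subset_closedBall.trans
      (closedBall_subset_closedBall (by linarith)))))
  have hreal := ENNReal.toReal_mono hfin hcount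
  rw [ENNReal.toReal_mul, ENNReal.toReal_natCast] at hreal
  rw [le_sub_iff_add_le, ← Real.log_mul hN.ne' hv.ne']
  exact Real.log_le_log (by positivity) hreal

theorem log_measure_closedBall_le_log_ncard_add (hdense : ∀ z : X, ∃ γ : Γ, dist z (γ • x) ≤ D)
    (hfinite : {γ : Γ | dist x (γ • x) ≤ R + D}.Finite) (hD : μ (closedBall x D) ≠ ⊤)
    (hR : μ (closedBall x R) ≠ 0) :
    Real.log (μ (closedBall x R)).toReal ≤
      Real.log {γ : Γ | dist x (γ • x) ≤ R + D}.ncard + Real.log (μ (closedBall x D)).toReal := by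
  have hcover := measure_closedBall_le_ncard_mul hdense hfinite (μ := μ)
  have hbound_fin : ({γ : Γ | dist x (γ • x) ≤ R + D}.ncard : ℝ≥0∞) * μ (closedBall x D) ≠ ⊤ :=
    ENNReal.mul_ne_top (ENNReal.natCast_ne_top _) hD
  have hreal := ENNReal.toReal_mono hbound_fin hcover
  rw [ENNReal.toReal_mul, ENNReal.toReal_natCast] at hreal
  have hV : 0 < (μ (closedBall x R)).toReal :=
    ENNReal.toReal_pos hR (ne_top_of_le_ne_top hbound_fin hcover)
  have hprod := (hV.trans_le hreal).ne'
  rw [← Real.log_mul (left_ne_zero_of_mul hprod) (right_ne_zero_of_mul hprod)]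
  exact Real.log_le_log hV hreal

end OrbitCounting

/-- for a cocompact, uniformly separated, measure-preserving isometric
action, the orbit sets are finite and the exponential growth rate of orbit counts
equals the exponential volume growth rate. -/
theorem stmt_3 {Γ X : Type*} [Group Γ] [MetricSpace X] [MeasurableSpace X]
    [BorelSpace X] [MulAction Γ X]
    (hiso : ∀ γ : Γ, Isometry (fun p : X => γ • p))
    (μ : Measure X)
    (hinv : ∀ (γ : Γ) (A : Set X), MeasurableSet A → μ ((fun p : X => γ • p) '' A) = μ A)
    (hfin : ∀ (z : X) (R : ℝ), 0 < R → μ (closedBall z R) < ⊤)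
    (x : X)
    (D : ℝ) (hD : 0 < D) (hdense : ∀ z : X, ∃ γ : Γ, dist z (γ • x) ≤ D)
    (δ : ℝ) (hδ : 0 < δ)
    (hsep : ∀ γ γ' : Γ, γ ≠ γ' → δ ≤ dist (γ • x) (γ' • x))
    (hpos : 0 < μ (ball x (δ / 2))) :
    (∀ R : ℝ, {γ : Γ | dist x (γ • x) ≤ R}.Finite) ∧
      limsup (fun R : ℝ => Real.log ({γ : Γ | dist x (γ • x) ≤ R}.ncard) / R) atTop =
        limsup (fun R : ℝ => Real.log (μ (closedBall x R)).toReal / R) atTop := by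
  have : IsIsometricSMul Γ X := ⟨hiso⟩
  have : SMulInvariantMeasure Γ X μ := ⟨fun γ A hA => by rw [preimage_smul]; exact hinv γ⁻¹ A hA⟩
  have hfin' : ∀ R, 0 ≤ R → μ (closedBall x (R + δ / 2)) ≠ ⊤ :=
    fun R hR => (hfin x _ (by positivity)).ne
  have hfinite : ∀ R, {γ : Γ | dist x (γ • x) ≤ R}.Finite := fun R =>
    (finite_setOf_dist_smul_le hsep hpos.ne' (hfin' _ (le_max_right R 0))).subset
      fun γ hγ => le_trans hγ (le_max_left R 0)
  have hball_le : ∀ R, δ / 2 ≤ R → μ (ball x (δ / 2)) ≤ μ (closedBall x R) := fun R hR =>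
    measure_mono (ball_subset_closedBall.trans (closedBall_subset_closedBall hR))
  refine ⟨hfinite, limsup_div_eq_of_le_shift (c₁ := δ / 2)
    (C₁ := -Real.log (μ (ball x (δ / 2))).toReal) (c₂ := D)
    (C₂ := Real.log (μ (closedBall x D)).toReal) ?_ ?_ ?_ ?_⟩
  · filter_upwards [eventually_ge_atTop 0] with R hR
    exact (log_ncard_le_log_measure_closedBall_sub hsep hpos.ne' (hfin' R hR) hR).trans_eq
      (sub_eq_add_neg _ _)
  · filter_upwards [eventually_ge_atTop (δ / 2)] with R hR
    exact log_measure_closedBall_le_log_ncard_add hdense (hfinite _) (hfin x D hD).ne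
      (hpos.trans_le (hball_le R hR)).ne'
  · refine isBoundedUnder_of_eventually_ge (a := 0) ?_
    filter_upwards [eventually_ge_atTop 0] with R hR
    exact Real.log_nonneg (by exact_mod_cast one_le_ncard_setOf_dist_smul_le (hfinite R) hR)
  · refine isBoundedUnder_of_eventually_ge (a := Real.log (μ (ball x (δ / 2))).toReal) ?_
    filter_upwards [eventually_ge_atTop (δ / 2)] with R hR
    have hVR := (hfin x R (by linarith)).ne
    exact Real.log_le_log (ENNReal.toReal_pos hpos.ne' (ne_top_of_le_ne_top hVR (hball_le R hR)))
      (ENNReal.toReal_mono hVR (hball_le R hR))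
end

section
/- Let Γ be a group acting by isometries on a metric space X, let Γ' be a finite normal subgroup of Γ, and let x ∈ X. For R ≥ 0 set A(R) = {γ ∈ Γ : dist(x, γ·x) ≤ R} and Â(R) = {c ∈ Γ/Γ' : there exists γ ∈ Γ with γΓ' = c and dist(x, γ·x) ≤ R}, and assume each A(R) is finite. Then limsup_{R→∞} (log |A(R)|)/R = limsup_{R→∞} (log |Â(R)|)/R; that is, the exponential orbit growth rate of Γ at x equals that of the coset counting function of Γ/Γ'. -/
/-!
The fibres of `Γ → Γ ⧸ Γ'` are cosets of size `|Γ'|`, so the orbit count `a(R) = |A(R)|` and the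
coset count `b(R) = |Â(R)|` satisfy `b ≤ a ≤ |Γ'| b`. Hence `log a / R` and `log b / R` differ by
at most `log |Γ'| / R → 0`, and functions whose difference tends to zero have the same limsup.
-/

open Set Filter

theorem Real.limsup_eq_limsup_of_tendsto_sub {ι : Type*} {l : Filter ι} [l.NeBot]
    {f g : ι → ℝ} (hg : IsBoundedUnder (· ≥ ·) l g) (hfg : Tendsto (f - g) l (nhds 0)) :
    limsup f l = limsup g l := by
  have hgf : Tendsto (g - f) l (nhds 0) := by rw [← neg_sub, ← neg_zero]; exact hfg.neg
  have hf : IsBoundedUnder (· ≥ ·) l f := by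
    simpa using isBoundedUnder_ge_add hg hfg.isBoundedUnder_ge
  have limsup_le {u v : ι → ℝ} (hv : IsBoundedUnder (· ≥ ·) l v)
      (hv' : IsBoundedUnder (· ≤ ·) l v) (huv : Tendsto (u - v) l (nhds 0)) :
      limsup u l ≤ limsup v l := by
    calc limsup u l = limsup (v + (u - v)) l := by rw [add_sub_cancel]
      _ ≤ limsup v l + limsup (u - v) l :=
        limsup_add_le hv hv' huv.isBoundedUnder_ge.isCoboundedUnder_le huv.isBoundedUnder_le
      _ = limsup v l := by rw [huv.limsup_eq, add_zero]
  by_cases hg' : IsBoundedUnder (· ≤ ·) l g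
  · have hf' : IsBoundedUnder (· ≤ ·) l f := by
      simpa using isBoundedUnder_le_add hg' hfg.isBoundedUnder_le
    exact (limsup_le hg hg' hfg).antisymm (limsup_le hf hf' hgf)
  · have hf' : ¬ IsBoundedUnder (· ≤ ·) l f := fun hf' ↦
      hg' (by simpa using isBoundedUnder_le_add hf' hgf.isBoundedUnder_le)
    rw [Real.limsup_of_not_isBoundedUnder hf', Real.limsup_of_not_isBoundedUnder hg']

theorem QuotientGroup.ncard_le_card_mul_ncard_image_mk {G : Type*} [Group G] (H : Subgroup G)
    [Finite H] (s : Set G) : s.ncard ≤ Nat.card H * ((QuotientGroup.mk : G → G ⧸ H) '' s).ncard := by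
  rcases s.finite_or_infinite with hs | hs
  · calc s.ncard ≤ (QuotientGroup.mk ⁻¹' ((QuotientGroup.mk : G → G ⧸ H) '' s)).ncard := by
          refine ncard_le_ncard (subset_preimage_image _ _) ?_
          rw [preimage_image_mk_eq_mul]
          exact hs.mul (toFinite _)
      _ = _ := by rw [← Nat.card_coe_set_eq, card_preimage_mk, Nat.card_coe_set_eq]
  · simp [hs.ncard]

theorem limsup_log_div_eq_of_le_of_le_mul {a b : ℝ → ℕ} {K : ℕ}
    (h : ∀ᶠ R in atTop, b R ≤ a R ∧ a R ≤ K * b R) :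
    limsup (fun R ↦ Real.log (a R) / R) atTop = limsup (fun R ↦ Real.log (b R) / R) atTop := by
  have hlog : ∀ᶠ R in atTop, 0 ≤ Real.log (a R) - Real.log (b R) ∧
      Real.log (a R) - Real.log (b R) ≤ Real.log K := by
    filter_upwards [h] with R ⟨hba, habK⟩
    rcases (b R).eq_zero_or_pos with hb | hb
    · -- `b R = 0` forces `a R = 0`, and `Real.log 0 = 0`
      simp [hb, show a R = 0 by simpa [hb] using habK, Real.log_natCast_nonneg]
    have ha : (0 : ℝ) < a R := Nat.cast_pos.2 (hb.trans_le hba)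
    have hK : 0 < K := Nat.pos_of_ne_zero (by rintro rfl; omega)
    refine ⟨sub_nonneg.2 (Real.log_le_log (by positivity) (by exact_mod_cast hba)), ?_⟩
    have := Real.log_le_log ha (by exact_mod_cast habK : (a R : ℝ) ≤ K * b R)
    rw [Real.log_mul (by positivity) (by positivity)] at this
    linarith
  refine Real.limsup_eq_limsup_of_tendsto_sub ⟨0, ?_⟩ ?_
  · rw [eventually_map]
    filter_upwards [eventually_ge_atTop 0] with R hR
    exact div_nonneg (Real.log_natCast_nonneg _) hR
  · have hK : Tendsto (fun R : ℝ ↦ Real.log K / R) atTop (nhds 0) :=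
      tendsto_const_nhds.div_atTop tendsto_id
    refine tendsto_of_tendsto_of_tendsto_of_le_of_le' tendsto_const_nhds hK ?_ ?_
    · filter_upwards [hlog, eventually_ge_atTop 0] with R h hR
      simp only [Pi.sub_apply, ← sub_div]
      exact div_nonneg h.1 hR
    · filter_upwards [hlog, eventually_ge_atTop 0] with R h hR
      simp only [Pi.sub_apply, ← sub_div]
      exact div_le_div_of_nonneg_right h.2 hR

theorem stmt_5_general {Γ X : Type*} [Group Γ] [MetricSpace X] [MulAction Γ X]
    (Γ' : Subgroup Γ) (hΓ' : (Γ' : Set Γ).Finite) (x : X)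
    (hfin : ∀ R : ℝ, 0 ≤ R → {γ : Γ | dist x (γ • x) ≤ R}.Finite) :
    limsup (fun R : ℝ => Real.log ({γ : Γ | dist x (γ • x) ≤ R}.ncard) / R) atTop =
      limsup (fun R : ℝ =>
        Real.log ({c : Γ ⧸ Γ' | ∃ γ : Γ, (γ : Γ ⧸ Γ') = c ∧ dist x (γ • x) ≤ R}.ncard) / R)
        atTop := by
  have : Finite Γ' := hΓ'
  have hquot (R : ℝ) : {c : Γ ⧸ Γ' | ∃ γ : Γ, (γ : Γ ⧸ Γ') = c ∧ dist x (γ • x) ≤ R} =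
      QuotientGroup.mk '' {γ : Γ | dist x (γ • x) ≤ R} :=
    Set.ext fun _ ↦ exists_congr fun _ ↦ and_comm
  simp only [hquot]
  refine limsup_log_div_eq_of_le_of_le_mul (K := Nat.card Γ') ?_
  filter_upwards [eventually_ge_atTop 0] with R hR
  exact ⟨ncard_image_le (hfin R hR), QuotientGroup.ncard_le_card_mul_ncard_image_mk Γ' _⟩

/-- quotienting by a finite normal subgroup does not change the
exponential growth rate of orbit counts. -/
theorem stmt_5 {Γ X : Type*} [Group Γ] [MetricSpace X] [MulAction Γ X]
    (hiso : ∀ γ : Γ, Isometry (fun p : X => γ • p))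
    (Γ' : Subgroup Γ) [Γ'.Normal] (hΓ' : (Γ' : Set Γ).Finite) (x : X)
    (hfin : ∀ R : ℝ, 0 ≤ R → {γ : Γ | dist x (γ • x) ≤ R}.Finite) :
    limsup (fun R : ℝ => Real.log ({γ : Γ | dist x (γ • x) ≤ R}.ncard) / R) atTop =
      limsup (fun R : ℝ =>
        Real.log ({c : Γ ⧸ Γ' | ∃ γ : Γ, (γ : Γ ⧸ Γ') = c ∧ dist x (γ • x) ≤ R}.ncard) / R)
        atTop :=
  stmt_5_general Γ' hΓ' x hfin
end

section
/- Let N be a nilpotent subgroup of SL(2, ℝ) such that every element A ∈ N has a fixed point in the upper half-plane ℍ under the Möbius action (there exists z ∈ ℍ with A • z = z). Then there exists a common fixed point: some z₀ ∈ ℍ with A • z₀ = z₀ for every A ∈ N. -/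
/-!
A Möbius transformation fixing two points of `ℍ` is the identity on `ℍ`: its fixed-point equation
`c z² + (d - a) z - b = 0` has real coefficients, so it has at most one root in `ℍ` unless it
vanishes identically. Pass to the image of `N` in the permutations of `ℍ`, which is nilpotent.
If it is nontrivial it has a nontrivial central element; that element has a unique fixed point,
and everything commuting with it must preserve this point.
-/

open UpperHalfPlane MatrixGroups MulAction

theorem MulAction.exists_forall_smul_eq_self_of_isNilpotent {G X : Type*} [Group G]
    [MulAction G X] [Group.IsNilpotent G] (hfix : ∀ g : G, (fixedBy X g).Nonempty)
    (huniv : ∀ g : G, (fixedBy X g).Nontrivial → fixedBy X g = Set.univ) :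
    ∃ x : X, ∀ g : G, g • x = x := by
  let ρ := toPermHom G X
  by_cases hρ : Nontrivial ρ.range
  · have : Group.IsNilpotent ρ.range :=
      Group.nilpotent_of_surjective _ ρ.rangeRestrict_surjective
    obtain ⟨⟨σ, hσ⟩, hσ1⟩ :=
      Subgroup.ne_bot_iff_exists_ne_one.mp (Group.IsNilpotent.center_ne_bot (G := ρ.range))
    obtain ⟨x, hx⟩ := σ.2
    obtain ⟨z, hz⟩ := hfix x
    refine ⟨z, fun g => by_contra fun hgz => hσ1 ?_⟩
    have hcomm : x • g • z = g • x • z := by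
      have := congrArg (fun τ : ρ.range => (τ : Equiv.Perm X) z)
        (Subgroup.mem_center_iff.mp hσ ⟨ρ g, g, rfl⟩)
      simpa [← hx, ρ] using this.symm
    have hfull := huniv x ⟨z, hz, g • z, by rw [mem_fixedBy, hcomm, hz], Ne.symm hgz⟩
    ext u
    simpa [← hx, ρ] using Set.eq_univ_iff_forall.mp hfull u
  · rw [not_nontrivial_iff_subsingleton] at hρ
    obtain ⟨z, -⟩ := hfix 1
    refine ⟨z, fun g => ?_⟩
    have : ρ g = 1 := congrArg Subtype.val (Subsingleton.elim (⟨ρ g, g, rfl⟩ : ρ.range) 1)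
    simpa [ρ] using congrArg (· z) this

namespace UpperHalfPlane

theorem smul_eq_self_iff (g : SL(2, ℝ)) (z : ℍ) :
    g • z = z ↔ (g 0 0 : ℂ) * z + g 0 1 = z * (g 1 0 * z + g 1 1) := by
  have hdenom := denom_ne_zero (Matrix.SpecialLinearGroup.mapGL ℝ g) z
  simp only [denom, Matrix.SpecialLinearGroup.mapGL_coe_matrix] at hdenom
  simpa [UpperHalfPlane.ext_iff, coe_specialLinearGroup_apply] using div_eq_iff hdenom

theorem fixedBy_eq_univ_of_nontrivial {g : SL(2, ℝ)} (h : (fixedBy ℍ g).Nontrivial) :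
    fixedBy ℍ g = Set.univ := by
  obtain ⟨z, hz, w, hw, hzw⟩ := h
  rw [mem_fixedBy, smul_eq_self_iff] at hz hw
  have hsub : (z : ℂ) - w ≠ 0 := sub_ne_zero.mpr (UpperHalfPlane.ext_iff.not.mp hzw)
  have hdiag : (g 0 0 : ℂ) = g 1 0 * (z + w) + g 1 1 :=
    mul_left_cancel₀ hsub (by linear_combination hz - hw)
  have hc : g 1 0 = 0 := by
    have him : g 1 0 * (z.im + w.im) = 0 := by
      simpa using (congrArg Complex.im hdiag).symm
    exact (mul_eq_zero.mp him).resolve_right (add_pos z.im_pos w.im_pos).ne'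
  have had : g 0 0 = g 1 1 := by simpa [hc] using congrArg Complex.re hdiag
  have hb : g 0 1 = 0 := by
    rw [hc, had] at hz
    push_cast at hz
    exact_mod_cast (by linear_combination hz : (g 0 1 : ℂ) = 0)
  refine Set.eq_univ_of_forall fun u => ?_
  rw [mem_fixedBy, smul_eq_self_iff, hc, had, hb]
  push_cast
  ring

end UpperHalfPlane

/-- a nilpotent subgroup of SL(2, ℝ) all of whose elements have a
fixed point in the upper half-plane has a common fixed point. -/
theorem stmt_9 (N : Subgroup SL(2, ℝ)) [Group.IsNilpotent N]
    (hfix : ∀ A ∈ N, ∃ z : ℍ, A • z = z) :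
    ∃ z₀ : ℍ, ∀ A ∈ N, A • z₀ = z₀ := by
  obtain ⟨z₀, hz₀⟩ := exists_forall_smul_eq_self_of_isNilpotent (G := N) (X := ℍ)
    (fun A => hfix A A.2) (fun A hA => fixedBy_eq_univ_of_nontrivial hA)
  exact ⟨z₀, fun A hA => hz₀ ⟨A, hA⟩⟩
end

section
/- Let N be a nilpotent subgroup of SL(2, ℝ) and let A ∈ N satisfy |trace A| > 2. Then A has two distinct real eigenvalues λ and λ⁻¹, with corresponding one-dimensional eigenspaces (lines) L₁, L₂ ⊆ ℝ², and for every B ∈ N the pair of lines is preserved: either B(L₁) = L₁ and B(L₂) = L₂, or B(L₁) = L₂ and B(L₂) = L₁ (images taken as subspaces under the linear map determined by B). -/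
/-!
Let `L₁, L₂` be the eigenlines of `A`, and `S` the stabilizer in `N` of the pair `{L₁, L₂}`; it
contains `A`. If `g` normalizes `S`, then `T = g A g⁻¹ ∈ S`, so `T²` fixes `L₁` and `L₂`, i.e.
`A² = g⁻¹ T² g` fixes the lines `g⁻¹ L₁` and `g⁻¹ L₂`. The eigenvalues `λ², λ⁻²` of `A²` are
distinct, so its only invariant lines are `L₁` and `L₂`; hence `g ∈ S`. Thus `S` is
self-normalizing, and since nilpotent groups satisfy the normalizer condition, `S = N`.
-/

open MatrixGroups Module Pointwise

theorem Subgroup.eq_top_of_conj_mem_imp_mem {G : Type*} [Group G] [Group.IsNilpotent G]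
    {S : Subgroup G} {a : G} (ha : a ∈ S) (h : ∀ g, g * a * g⁻¹ ∈ S → g ∈ S) : S = ⊤ :=
  normalizerCondition_iff_only_full_group_self_normalizing.mp
    Group.normalizerCondition_of_isNilpotent S <|
    le_antisymm (fun g hg => h g ((mem_normalizer_iff.mp hg a).mp ha)) le_normalizer

theorem MulAction.mem_stabilizer_pair_iff {G X : Type*} [Group G] [MulAction G X] {g : G}
    {x y : X} : g ∈ stabilizer G ({x, y} : Set X) ↔
      g • x = x ∧ g • y = y ∨ g • x = y ∧ g • y = x := by
  rw [mem_stabilizer_iff, Set.smul_set_insert, Set.smul_set_singleton, Set.pair_eq_pair_iff]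

theorem MulAction.mem_stabilizer_pair_of_conj_mem {G X : Type*} [Group G] [MulAction G X]
    (P : X → Prop) (hP : ∀ (g : G) (z : X), P z → P (g • z)) {a g : G} {x y : X}
    (hxy : x ≠ y) (hx : P x) (hy : P y) (hfix : ∀ z, P z → a ^ 2 • z = z → z = x ∨ z = y)
    (h : g * a * g⁻¹ ∈ stabilizer G ({x, y} : Set X)) :
    g ∈ stabilizer G ({x, y} : Set X) := by
  set T := g * a * g⁻¹
  have hT : T • T • x = x ∧ T • T • y = y := by
    rw [mem_stabilizer_pair_iff] at h
    rcases h with ⟨h₁, h₂⟩ | ⟨h₁, h₂⟩ <;> simp only [h₁, h₂, and_self]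
  have hconj : ∀ z : X, a ^ 2 • g⁻¹ • z = g⁻¹ • T • T • z := by
    intro z; simp only [T, smul_smul, sq, mul_assoc, inv_mul_cancel_left]
  have hx' := hfix _ (hP _ _ hx) (by rw [hconj, hT.1])
  have hy' := hfix _ (hP _ _ hy) (by rw [hconj, hT.2])
  have hinj : g⁻¹ • x ≠ g⁻¹ • y := fun h => hxy (smul_left_cancel _ h)
  refine (Subgroup.inv_mem_iff _).mp ?_
  rw [mem_stabilizer_pair_iff]
  rcases hx' with hx' | hx' <;> rcases hy' with hy' | hy' <;> simp_all

theorem MulAction.le_stabilizer_pair_of_isNilpotent {G X : Type*} [Group G] [MulAction G X]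
    (N : Subgroup G) [Group.IsNilpotent N] (P : X → Prop) (hP : ∀ (g : G) (z : X), P z → P (g • z))
    {a : G} {x y : X} (haN : a ∈ N) (ha : a ∈ stabilizer G ({x, y} : Set X)) (hxy : x ≠ y)
    (hx : P x) (hy : P y) (hfix : ∀ z, P z → a ^ 2 • z = z → z = x ∨ z = y) :
    N ≤ stabilizer G ({x, y} : Set X) := by
  have htop : (stabilizer G ({x, y} : Set X)).subgroupOf N = ⊤ := by
    refine Subgroup.eq_top_of_conj_mem_imp_mem (a := ⟨a, haN⟩)
      (Subgroup.mem_subgroupOf.mpr ha) fun g hg => Subgroup.mem_subgroupOf.mpr ?_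
    rw [Subgroup.mem_subgroupOf, Subgroup.coe_mul, Subgroup.coe_mul, Subgroup.coe_inv] at hg
    exact mem_stabilizer_pair_of_conj_mem P hP hxy hx hy hfix hg
  exact fun g hg => Subgroup.mem_subgroupOf.mp (htop.symm ▸ Subgroup.mem_top (⟨g, hg⟩ : N))

theorem Submodule.finrank_pointwise_smul {G K V : Type*} [Group G] [Field K] [AddCommGroup V]
    [Module K V] [DistribMulAction G V] [SMulCommClass G K V] (g : G) (L : Submodule K V) :
    finrank K ↥(g • L) = finrank K L :=
  (DistribMulAction.toLinearEquiv K V g).finrank_map_eq L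

namespace Module.End

variable {K V : Type*} [Field K] [AddCommGroup V] [Module K V] {f : End K V} {μ₁ μ₂ : K}

theorem map_eigenspace_self {μ : K} (hμ : μ ≠ 0) : (f.eigenspace μ).map f = f.eigenspace μ := by
  refine le_antisymm (Submodule.map_le_iff_le_comap.mpr fun v hv => ?_) fun v hv => ?_
  · simp [mem_eigenspace_iff.mp hv, Submodule.smul_mem _ μ hv]
  · refine ⟨μ⁻¹ • v, Submodule.smul_mem _ _ hv, ?_⟩
    rw [map_smul, mem_eigenspace_iff.mp hv, smul_smul, inv_mul_cancel₀ hμ, one_smul]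

theorem pow_apply_of_mem_eigenspace {μ : K} {u : V} (hu : u ∈ f.eigenspace μ) (n : ℕ) :
    (f ^ n) u = μ ^ n • u := by
  induction n with
  | zero => simp
  | succ n ih =>
    rw [pow_succ', mul_apply, ih, map_smul, mem_eigenspace_iff.mp hu, smul_smul, pow_succ]

theorem finrank_eigenspace_eq_one_of_finrank_eq_two [FiniteDimensional K V]
    (hV : finrank K V = 2) (hμ : μ₁ ≠ μ₂) (h₁ : f.HasEigenvalue μ₁) (h₂ : f.HasEigenvalue μ₂) :
    finrank K (f.eigenspace μ₁) = 1 ∧ finrank K (f.eigenspace μ₂) = 1 ∧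
      f.eigenspace μ₁ ⊔ f.eigenspace μ₂ = ⊤ := by
  have hinf : f.eigenspace μ₁ ⊓ f.eigenspace μ₂ = ⊥ :=
    disjoint_iff.mp (f.eigenspaces_iSupIndep.pairwiseDisjoint hμ)
  have hdim := Submodule.finrank_sup_add_finrank_inf_eq (f.eigenspace μ₁) (f.eigenspace μ₂)
  have hpos₁ := Submodule.finrank_eq_zero.not.mpr (hasEigenvalue_iff.mp h₁)
  have hpos₂ := Submodule.finrank_eq_zero.not.mpr (hasEigenvalue_iff.mp h₂)
  have hle := Submodule.finrank_le (f.eigenspace μ₁ ⊔ f.eigenspace μ₂)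
  rw [hinf, finrank_bot] at hdim
  exact ⟨by omega, by omega, Submodule.eq_top_of_finrank_eq (by omega)⟩

theorem mem_eigenspace_or_of_pow_apply_mem_span (n : ℕ) (hμ : μ₁ ^ n ≠ μ₂ ^ n)
    (hsup : f.eigenspace μ₁ ⊔ f.eigenspace μ₂ = ⊤) {w : V} (hw : (f ^ n) w ∈ K ∙ w) :
    w ∈ f.eigenspace μ₁ ∨ w ∈ f.eigenspace μ₂ := by
  obtain ⟨u₁, hu₁, u₂, hu₂, rfl⟩ := Submodule.mem_sup.mp (hsup ▸ Submodule.mem_top (x := w))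
  obtain ⟨c, hc⟩ := Submodule.mem_span_singleton.mp hw
  -- `(μ₁ ^ n - c) • u₁ = (c - μ₂ ^ n) • u₂` lies in both eigenspaces, hence vanishes
  have heq : (μ₁ ^ n - c) • u₁ = (c - μ₂ ^ n) • u₂ := by
    rw [map_add, pow_apply_of_mem_eigenspace hu₁, pow_apply_of_mem_eigenspace hu₂] at hc
    linear_combination (norm := module) (-1 : K) • hc
  have hzero : (μ₁ ^ n - c) • u₁ = 0 := by
    have hdisj := f.eigenspaces_iSupIndep.pairwiseDisjoint (fun h : μ₁ = μ₂ => hμ (by rw [h]))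
    exact (Submodule.disjoint_def.mp hdisj) _ (Submodule.smul_mem _ _ hu₁)
      (heq ▸ Submodule.smul_mem _ _ hu₂)
  rcases smul_eq_zero.mp hzero with hc₁ | rfl
  · refine .inl (add_mem hu₁ ?_)
    rw [hzero, eq_comm, smul_eq_zero] at heq
    rcases heq with hc₂ | rfl
    · exact absurd (sub_eq_zero.mp hc₁ ▸ (sub_eq_zero.mp hc₂)) hμ
    · exact zero_mem _
  · exact .inr (by simpa using hu₂)

theorem eq_eigenspace_or_of_map_pow_le (n : ℕ) (hμ : μ₁ ^ n ≠ μ₂ ^ n)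
    (h₁ : finrank K (f.eigenspace μ₁) = 1) (h₂ : finrank K (f.eigenspace μ₂) = 1)
    (hsup : f.eigenspace μ₁ ⊔ f.eigenspace μ₂ = ⊤) {L : Submodule K V} (hL : finrank K L = 1)
    (hfL : L.map (f ^ n) ≤ L) : L = f.eigenspace μ₁ ∨ L = f.eigenspace μ₂ := by
  obtain ⟨w, hwL, hw⟩ := L.exists_mem_ne_zero_of_ne_bot (by rintro rfl; simp at hL)
  have hLw := eq_span_singleton_of_mem_of_finrank_eq_one hL hwL hw
  have hfw : (f ^ n) w ∈ K ∙ w := hLw ▸ hfL (Submodule.mem_map_of_mem hwL)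
  rcases mem_eigenspace_or_of_pow_apply_mem_span n hμ hsup hfw with hw' | hw'
  · exact .inl (hLw.trans (eq_span_singleton_of_mem_of_finrank_eq_one h₁ hw' hw).symm)
  · exact .inr (hLw.trans (eq_span_singleton_of_mem_of_finrank_eq_one h₂ hw' hw).symm)

end Module.End

theorem Matrix.SpecialLinearGroup.smul_submodule_eq_map {ι F : Type*} [Fintype ι] [DecidableEq ι]
    [CommRing F] (g : Matrix.SpecialLinearGroup ι F) (L : Submodule F (ι → F)) :
    g • L = L.map (Matrix.toLin' (g : Matrix ι ι F)) := rfl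

theorem Matrix.SpecialLinearGroup.hasEigenvalue_toLin'_iff {K : Type*} [Field K] (A : SL(2, K))
    (μ : K) : Module.End.HasEigenvalue (Matrix.toLin' (A : Matrix (Fin 2) (Fin 2) K)) μ ↔
      μ ^ 2 - Matrix.trace (A : Matrix (Fin 2) (Fin 2) K) * μ + 1 = 0 := by
  rw [End.hasEigenvalue_iff_isRoot_charpoly, Matrix.charpoly_toLin', Matrix.charpoly_fin_two,
    A.det_coe]
  simp [Polynomial.IsRoot]

theorem exists_sq_sub_mul_add_one_eq_zero {t : ℝ} (ht : 2 < |t|) :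
    ∃ lam : ℝ, lam ^ 2 - t * lam + 1 = 0 ∧ lam ^ 2 ≠ 1 := by
  have ht4 : 4 < t ^ 2 := by nlinarith [sq_abs t, abs_nonneg t]
  have hs := Real.sq_sqrt (by linarith : (0 : ℝ) ≤ t ^ 2 - 4)
  refine ⟨(t + √(t ^ 2 - 4)) / 2, by linear_combination hs / 4, fun h => ?_⟩
  nlinarith

theorem Matrix.SpecialLinearGroup.exists_hasEigenvalue_and_inv_of_two_lt_abs_trace
    (A : SL(2, ℝ)) (htr : 2 < |Matrix.trace (A : Matrix (Fin 2) (Fin 2) ℝ)|) :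
    ∃ lam : ℝ, lam ^ 2 ≠ lam⁻¹ ^ 2 ∧
      Module.End.HasEigenvalue (Matrix.toLin' (A : Matrix (Fin 2) (Fin 2) ℝ)) lam ∧
      Module.End.HasEigenvalue (Matrix.toLin' (A : Matrix (Fin 2) (Fin 2) ℝ)) lam⁻¹ := by
  obtain ⟨lam, hroot, hsq⟩ := exists_sq_sub_mul_add_one_eq_zero htr
  have hlam : lam ≠ 0 := by rintro rfl; norm_num at hroot
  refine ⟨lam, fun h => hsq ?_, (A.hasEigenvalue_toLin'_iff lam).mpr hroot,
    (A.hasEigenvalue_toLin'_iff _).mpr (by field_simp; linear_combination hroot)⟩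
  field_simp at h
  nlinarith [sq_nonneg (lam ^ 2 - 1), sq_nonneg lam]

/-- in a nilpotent subgroup of SL(2, ℝ), every element preserves
the pair of eigenlines of a hyperbolic element. -/
theorem stmt_10 (N : Subgroup SL(2, ℝ)) [Group.IsNilpotent N]
    (A : SL(2, ℝ)) (hA : A ∈ N)
    (htr : 2 < |Matrix.trace (A : Matrix (Fin 2) (Fin 2) ℝ)|) :
    ∃ lam : ℝ, lam ≠ lam⁻¹ ∧
      Module.End.HasEigenvalue (Matrix.toLin' ((A : Matrix (Fin 2) (Fin 2) ℝ))) lam ∧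
      Module.End.HasEigenvalue (Matrix.toLin' ((A : Matrix (Fin 2) (Fin 2) ℝ))) lam⁻¹ ∧
      (∀ L₁ L₂ : Submodule ℝ (Fin 2 → ℝ),
        L₁ = Module.End.eigenspace (Matrix.toLin' ((A : Matrix (Fin 2) (Fin 2) ℝ))) lam →
        L₂ = Module.End.eigenspace (Matrix.toLin' ((A : Matrix (Fin 2) (Fin 2) ℝ))) lam⁻¹ →
        Module.finrank ℝ L₁ = 1 ∧ Module.finrank ℝ L₂ = 1 ∧
          ∀ B ∈ N,
            (Submodule.map (Matrix.toLin' ((B : Matrix (Fin 2) (Fin 2) ℝ))) L₁ = L₁ ∧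
              Submodule.map (Matrix.toLin' ((B : Matrix (Fin 2) (Fin 2) ℝ))) L₂ = L₂) ∨
            (Submodule.map (Matrix.toLin' ((B : Matrix (Fin 2) (Fin 2) ℝ))) L₁ = L₂ ∧
              Submodule.map (Matrix.toLin' ((B : Matrix (Fin 2) (Fin 2) ℝ))) L₂ = L₁)) := by
  set f : Module.End ℝ (Fin 2 → ℝ) := Matrix.toLin' (A : Matrix (Fin 2) (Fin 2) ℝ)
  obtain ⟨lam, hne₂, h₁, h₂⟩ := A.exists_hasEigenvalue_and_inv_of_two_lt_abs_trace htr
  have hlam : lam ≠ 0 := by rintro rfl; simp at hne₂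
  have hne : lam ≠ lam⁻¹ := fun h => hne₂ (by rw [← h])
  obtain ⟨hr₁, hr₂, hsup⟩ :=
    Module.End.finrank_eigenspace_eq_one_of_finrank_eq_two (by simp) hne h₁ h₂
  refine ⟨lam, hne, h₁, h₂, ?_⟩
  rintro _ _ rfl rfl
  have hE : f.eigenspace lam ≠ f.eigenspace lam⁻¹ := fun h => by
    rw [h, sup_idem] at hsup
    rw [h, hsup, finrank_top] at hr₁
    simp at hr₁
  have hAE :
      A • f.eigenspace lam = f.eigenspace lam ∧ A • f.eigenspace lam⁻¹ = f.eigenspace lam⁻¹ :=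
    ⟨Module.End.map_eigenspace_self hlam, Module.End.map_eigenspace_self (inv_ne_zero hlam)⟩
  have hfix : ∀ L : Submodule ℝ (Fin 2 → ℝ), finrank ℝ L = 1 → A ^ 2 • L = L →
      L = f.eigenspace lam ∨ L = f.eigenspace lam⁻¹ := fun L hL hAL =>
    Module.End.eq_eigenspace_or_of_map_pow_le 2 hne₂ hr₁ hr₂ hsup hL <| by
      rw [← Matrix.toLin'_pow, ← Matrix.SpecialLinearGroup.coe_pow,
        ← Matrix.SpecialLinearGroup.smul_submodule_eq_map, hAL]
  have hN := MulAction.le_stabilizer_pair_of_isNilpotent N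
    (fun L : Submodule ℝ (Fin 2 → ℝ) => finrank ℝ L = 1)
    (fun g L hL => (Submodule.finrank_pointwise_smul g L).trans hL) hA
    (MulAction.mem_stabilizer_pair_iff.mpr (.inl hAE)) hE hr₁ hr₂ hfix
  exact ⟨hr₁, hr₂, fun B hB => MulAction.mem_stabilizer_pair_iff.mp (hN hB)⟩
end

section
/- Let G be a subgroup of SL(2, ℝ) such that every g ∈ G maps the positive imaginary axis A = {y·i : y > 0} ⊆ ℍ onto itself under the Möbius action (g • A = A). Then for every D > 0 and every z₀ ∈ ℍ there exists z ∈ ℍ such that dist(z, g • z₀) > D for every g ∈ G; in particular, no orbit of G is D-dense in ℍ. -/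
open UpperHalfPlane MatrixGroups

lemma axis_dist_lower (x : ℝ) (z w : ℍ) (hz : (z : ℂ) = (⟨x, 1⟩ : ℂ))
    (y : ℝ) (hy : 0 < y) (hw : (w : ℂ) = y * Complex.I) :
    x ≤ Real.cosh (dist z w) := by
  have hzim : z.im = 1 := by rw [UpperHalfPlane.im, hz]
  have hwim : w.im = y := by rw [UpperHalfPlane.im, hw]; simp
  have hd2 : dist (z : ℂ) (w : ℂ) ^ 2 = x ^ 2 + (1 - y) ^ 2 := by
    rw [Complex.dist_eq_re_im, Real.sq_sqrt (by positivity), hz, hw]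
    simp
  rw [UpperHalfPlane.cosh_dist, hd2, hzim, hwim]
  rw [ge_iff_le.symm, ge_iff_le, ← sub_nonneg]
  have h : 1 + (x ^ 2 + (1 - y) ^ 2) / (2 * 1 * y) - x
      = ((x - y) ^ 2 + 1) / (2 * y) := by
    field_simp; ring
  rw [h]; positivity

/-- a subgroup of SL(2, ℝ) preserving the positive imaginary axis
has no D-dense orbit in the upper half-plane. -/
theorem stmt_12 (G : Subgroup SL(2, ℝ))
    (haxis : ∀ g ∈ G,
      (fun z : ℍ => g • z) '' {z : ℍ | ∃ y : ℝ, 0 < y ∧ (z : ℂ) = y * Complex.I} =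
        {z : ℍ | ∃ y : ℝ, 0 < y ∧ (z : ℂ) = y * Complex.I}) :
    ∀ D : ℝ, 0 < D → ∀ z₀ : ℍ, ∃ z : ℍ, ∀ g ∈ G, D < dist z (g • z₀) := by
  intro D hD z₀
  set C : ℝ := dist z₀ UpperHalfPlane.I with hC
  set R : ℝ := D + C with hR
  have hC0 : 0 ≤ C := dist_nonneg
  have hR0 : 0 < R := by positivity
  set x : ℝ := Real.cosh R + 1 with hx
  refine ⟨⟨(⟨x, 1⟩ : ℂ), one_pos⟩, ?_⟩
  intro g hg
  set z : ℍ := (⟨(⟨x, 1⟩ : ℂ), one_pos⟩ : ℍ)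
  -- g • I lies on the axis
  have hI : UpperHalfPlane.I ∈
      {z : ℍ | ∃ y : ℝ, 0 < y ∧ (z : ℂ) = y * Complex.I} :=
    ⟨1, one_pos, by simp [UpperHalfPlane.coe_I]⟩
  have hgI : g • UpperHalfPlane.I ∈
      {z : ℍ | ∃ y : ℝ, 0 < y ∧ (z : ℂ) = y * Complex.I} := by
    rw [← haxis g hg]; exact Set.mem_image_of_mem _ hI
  obtain ⟨y, hy, hw⟩ := hgI
  have hfar : x ≤ Real.cosh (dist z (g • UpperHalfPlane.I)) :=
    axis_dist_lower x z _ rfl y hy hw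
  have hRdist : R < dist z (g • UpperHalfPlane.I) := by
    have h1 : Real.cosh R < Real.cosh (dist z (g • UpperHalfPlane.I)) := by
      calc Real.cosh R < x := by simp [hx]
        _ ≤ _ := hfar
    have := (Real.cosh_lt_cosh).1 h1
    calc R = |R| := (abs_of_pos hR0).symm
      _ < |dist z (g • UpperHalfPlane.I)| := this
      _ = dist z (g • UpperHalfPlane.I) := abs_of_nonneg dist_nonneg
  have hiso : dist (g • UpperHalfPlane.I) (g • z₀) = C := by
    rw [dist_smul, dist_comm]
  have htri := dist_triangle z (g • UpperHalfPlane.I) (g • z₀)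
  -- dist z (g•I) ≤ dist z (g•z₀) + dist (g•z₀) (g•I)
  have htri' := dist_triangle z (g • z₀) (g • UpperHalfPlane.I)
  rw [dist_comm (g • z₀) (g • UpperHalfPlane.I), hiso] at htri'
  linarith
end
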